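/- As formal power series in q, ∑_{n∈ℤ} q^{n(5n+1)} = (q,q^9,q^{10};q^{10})_∞ (q^8,q^{12};q^{20})_∞ / (q,q^4;q^5)_∞. -/

import Mathlib

/-- The infinite q-Pochhammer symbol `(a;q)_∞ = ∏_{i≥0} (1 - a qⁱ)`. -/
noncomputable def qpoch (a q : ℂ) : ℂ := ∏' i : ℕ, (1 - a * q ^ i)

/-!
The left side is Jacobi's triple product `∑ Qⁿ² zⁿ = (Q²;Q²)_∞ (-zQ;Q²)_∞ (-Q/z;Q²)_∞` at
`Q = q⁵`, `z = q`. On the right, `(a;q⁵)_∞ = (a;q¹⁰)_∞ (aq⁵;q¹⁰)_∞` and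
`(a²;q²⁰)_∞ = (a;q¹⁰)_∞ (-a;q¹⁰)_∞` reduce everything to products with modulus `q¹⁰`.

The triple product is the limit `N → ∞` of its finite form
`∏_{j<N} (1 + zQ^{2j+1})(1 + z⁻¹Q^{2j+1}) = ∑_{|n| ≤ N} [2N, N+n]_{Q²} Qⁿ² zⁿ`, which holds by
induction on `N` from the Pascal rules for Gaussian binomial coefficients. The coefficients
`[2N, N+n]_p = (p;p)_{2N} / ((p;p)_{N+n} (p;p)_{N-n})` tend to `1/(p;p)_∞` and are uniformly
bounded, so Tannery's theorem lets the limit pass through the sum.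
-/

open Filter Finset Topology

def qpochPartial {R : Type*} [CommRing R] (a q : R) (n : ℕ) : R := ∏ i ∈ range n, (1 - a * q ^ i)

lemma qpochPartial_succ {R : Type*} [CommRing R] (a q : R) (n : ℕ) :
    qpochPartial a q (n + 1) = qpochPartial a q n * (1 - a * q ^ n) :=
  prod_range_succ _ _

lemma norm_pow_lt_one {𝕜 : Type*} [NormedDivisionRing 𝕜] {q : 𝕜} (hq : ‖q‖ < 1) {k : ℕ}
    (hk : k ≠ 0) : ‖q ^ k‖ < 1 := by
  rw [norm_pow]
  exact pow_lt_one₀ (norm_nonneg q) hq hk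

lemma summable_mul_pow {a q : ℂ} (hq : ‖q‖ < 1) : Summable fun i : ℕ => a * q ^ i :=
  (summable_geometric_of_norm_lt_one hq).mul_left a

lemma multipliable_one_sub_mul_pow (a : ℂ) {q : ℂ} (hq : ‖q‖ < 1) :
    Multipliable fun i : ℕ => 1 - a * q ^ i := by
  simpa [sub_eq_add_neg] using Complex.multipliable_one_add_of_summable (summable_mul_pow hq).neg

lemma tendsto_qpochPartial (a : ℂ) {q : ℂ} (hq : ‖q‖ < 1) :
    Tendsto (qpochPartial a q) atTop (𝓝 (qpoch a q)) :=
  (multipliable_one_sub_mul_pow a hq).tendsto_prod_tprod_nat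

lemma one_sub_mul_pow_ne_zero {a q : ℂ} (ha : ‖a‖ < 1) (hq : ‖q‖ ≤ 1) (i : ℕ) :
    1 - a * q ^ i ≠ 0 := by
  rw [sub_ne_zero]
  refine fun h => (norm_one (α := ℂ)).not_lt ?_
  rw [h, norm_mul, norm_pow]
  exact mul_lt_one_of_nonneg_of_lt_one_left (norm_nonneg a) ha (pow_le_one₀ (norm_nonneg q) hq)

lemma qpoch_ne_zero {a q : ℂ} (ha : ‖a‖ < 1) (hq : ‖q‖ < 1) : qpoch a q ≠ 0 := by
  have hfactor (i : ℕ) : 1 + -(a * q ^ i) ≠ 0 := by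
    simpa only [← sub_eq_add_neg] using one_sub_mul_pow_ne_zero ha hq.le i
  simpa [qpoch, sub_eq_add_neg] using
    tprod_one_add_ne_zero_of_summable hfactor (summable_mul_pow hq).neg.norm

lemma qpoch_eq_mul_qpoch_sq (a : ℂ) {q : ℂ} (hq : ‖q‖ < 1) :
    qpoch a q = qpoch a (q ^ 2) * qpoch (a * q) (q ^ 2) := by
  have hq2 : ‖q ^ 2‖ < 1 := norm_pow_lt_one hq two_ne_zero
  have hodd (k : ℕ) : a * q ^ (2 * k + 1) = a * q * (q ^ 2) ^ k := by ring
  rw [qpoch, ← tprod_even_mul_odd (f := fun i => 1 - a * q ^ i)]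
  · simp only [pow_mul, hodd, qpoch]
  · simpa only [pow_mul] using multipliable_one_sub_mul_pow a hq2
  · simpa only [hodd] using multipliable_one_sub_mul_pow (a * q) hq2

lemma qpoch_sq (a : ℂ) {q : ℂ} (hq : ‖q‖ < 1) :
    qpoch (a ^ 2) (q ^ 2) = qpoch a q * qpoch (-a) q := by
  rw [qpoch, qpoch, qpoch, ← (multipliable_one_sub_mul_pow a hq).tprod_mul
    (multipliable_one_sub_mul_pow (-a) hq)]
  exact tprod_congr fun i => by ring

section GaussBinom

variable {K : Type*} [Field K]

/-- The Gaussian binomial coefficient `[N, k]_p`, indexed by `k : ℤ` so that it vanishes outside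
`0 ≤ k ≤ N` and the Pascal rules hold without case distinctions. -/
noncomputable def gaussBinom (p : K) : ℕ → ℤ → K
  | 0, k => if k = 0 then 1 else 0
  | N + 1, k => gaussBinom p N (k - 1) + p ^ k * gaussBinom p N k

lemma gaussBinom_succ (p : K) (N : ℕ) (k : ℤ) :
    gaussBinom p (N + 1) k = gaussBinom p N (k - 1) + p ^ k * gaussBinom p N k := rfl

lemma gaussBinom_eq_zero (p : K) {N : ℕ} {k : ℤ} (hk : k ∉ Icc 0 (N : ℤ)) :
    gaussBinom p N k = 0 := by
  induction N generalizing k with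
  | zero => simp_all [gaussBinom]
  | succ N ih =>
    simp only [mem_Icc, not_and_or, not_le] at hk
    rw [gaussBinom_succ, ih (by simp only [mem_Icc]; omega), ih (by simp only [mem_Icc]; omega),
      mul_zero, add_zero]

lemma gaussBinom_zero_right (p : K) (N : ℕ) : gaussBinom p N 0 = 1 := by
  induction N with
  | zero => simp [gaussBinom]
  | succ N ih => simp [gaussBinom_succ, ih, gaussBinom_eq_zero]

lemma gaussBinom_self (p : K) (N : ℕ) : gaussBinom p N N = 1 := by
  induction N with
  | zero => simp [gaussBinom]
  | succ N ih => simp [gaussBinom_succ, ih, gaussBinom_eq_zero]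

lemma gaussBinom_succ' {p : K} (hp : p ≠ 0) (N : ℕ) (k : ℤ) :
    gaussBinom p (N + 1) k = p ^ ((N : ℤ) + 1 - k) * gaussBinom p N (k - 1) + gaussBinom p N k := by
  induction N generalizing k with
  | zero =>
    rcases eq_or_ne k 0 with rfl | hk0
    · simp [gaussBinom]
    rcases eq_or_ne k 1 with rfl | hk1
    · simp [gaussBinom]
    · simp [gaussBinom, hk0, sub_eq_zero, hk1]
  | succ N ih =>
    have hexp : p ^ k * p ^ ((N : ℤ) + 1 - k) = p ^ ((N : ℤ) + 2 - k) * p ^ (k - 1) := by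
      rw [← zpow_add₀ hp, ← zpow_add₀ hp]; ring_nf
    rw [gaussBinom_succ p (N + 1) k]
    conv_lhs => rw [ih, ih]
    rw [gaussBinom_succ p N (k - 1), gaussBinom_succ p N k]
    push_cast
    rw [show (N : ℤ) + 1 - (k - 1) = N + 2 - k by ring,
      show (N : ℤ) + 1 + 1 - k = N + 2 - k by ring]
    linear_combination gaussBinom p N (k - 1) * hexp

lemma gaussBinom_add_two {p : K} (hp : p ≠ 0) (N : ℕ) (k : ℤ) :
    gaussBinom p (N + 2) (k + 1) = (1 + p ^ (N + 1)) * gaussBinom p N k +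
      p ^ ((N : ℤ) + 1 - k) * gaussBinom p N (k - 1) + p ^ (k + 1) * gaussBinom p N (k + 1) := by
  have hexp : p ^ (k + 1) * p ^ ((N : ℤ) + 1 - (k + 1)) = p ^ (N + 1) := by
    rw [← zpow_add₀ hp, ← zpow_natCast]; push_cast; ring_nf
  rw [gaussBinom_succ, gaussBinom_succ' hp, gaussBinom_succ' hp, add_sub_cancel_right]
  linear_combination gaussBinom p N k * hexp

lemma gaussBinom_add_mul_qpochPartial (p : K) (j m : ℕ) :
    gaussBinom p (j + m) j * (qpochPartial p p j * qpochPartial p p m) =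
      qpochPartial p p (j + m) := by
  induction j generalizing m with
  | zero => simp [gaussBinom_zero_right, qpochPartial]
  | succ j ihj =>
    induction m with
    | zero => rw [add_zero, gaussBinom_self]; simp [qpochPartial]
    | succ m ihm =>
      have hj := ihj (m + 1)
      rw [show j + (m + 1) = j + 1 + m by ring, qpochPartial_succ p p m] at hj
      rw [← add_assoc, gaussBinom_succ, show ((j + 1 : ℕ) : ℤ) - 1 = j by push_cast; ring,
        zpow_natCast, qpochPartial_succ p p (j + 1 + m), qpochPartial_succ p p m]
      rw [qpochPartial_succ p p j] at ihm ⊢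
      linear_combination (1 - p * p ^ j) * hj + p ^ (j + 1) * (1 - p * p ^ m) * ihm

end GaussBinom

lemma gaussBinom_eq_div {p : ℂ} (hp : ‖p‖ < 1) (j m : ℕ) :
    gaussBinom p (j + m) j =
      qpochPartial p p (j + m) / (qpochPartial p p j * qpochPartial p p m) := by
  have hP (n : ℕ) : qpochPartial p p n ≠ 0 :=
    prod_ne_zero_iff.2 fun i _ => one_sub_mul_pow_ne_zero hp hp.le i
  exact eq_div_of_mul_eq (mul_ne_zero (hP j) (hP m)) (gaussBinom_add_mul_qpochPartial p j m)

lemma exists_norm_gaussBinom_le {p : ℂ} (hp : ‖p‖ < 1) :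
    ∃ M, ∀ N k, ‖gaussBinom p N k‖ ≤ M := by
  have hlim := tendsto_qpochPartial p hp
  obtain ⟨A, hA⟩ := isBounded_iff_forall_norm_le.1 (Metric.isBounded_range_of_tendsto _ hlim)
  obtain ⟨B, hB⟩ := isBounded_iff_forall_norm_le.1
    (Metric.isBounded_range_of_tendsto _ (hlim.inv₀ (qpoch_ne_zero hp hp)))
  have hA0 : 0 ≤ A := (norm_nonneg _).trans (hA _ ⟨0, rfl⟩)
  have hB0 : 0 ≤ B := (norm_nonneg _).trans (hB _ ⟨0, rfl⟩)
  refine ⟨A * B * B, fun N k => ?_⟩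
  by_cases hk : k ∈ Icc 0 (N : ℤ)
  · rw [mem_Icc] at hk
    obtain ⟨j, m, rfl, rfl⟩ : ∃ j m : ℕ, N = j + m ∧ k = j :=
      ⟨k.toNat, N - k.toNat, by omega, by omega⟩
    rw [gaussBinom_eq_div hp, div_eq_mul_inv, mul_inv, ← mul_assoc, norm_mul, norm_mul]
    gcongr
    exacts [hA _ ⟨_, rfl⟩, hB _ ⟨_, rfl⟩, hB _ ⟨_, rfl⟩]
  · rw [gaussBinom_eq_zero p hk, norm_zero]
    positivity

lemma tendsto_gaussBinom {p : ℂ} (hp : ‖p‖ < 1) {j m : ℕ → ℕ} (hj : Tendsto j atTop atTop)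
    (hm : Tendsto m atTop atTop) :
    Tendsto (fun N => gaussBinom p (j N + m N) (j N)) atTop (𝓝 (qpoch p p)⁻¹) := by
  have hlim := tendsto_qpochPartial p hp
  have hG := qpoch_ne_zero hp hp
  simp only [gaussBinom_eq_div hp]
  rw [show (qpoch p p)⁻¹ = qpoch p p / (qpoch p p * qpoch p p) by field_simp]
  exact (hlim.comp (hj.atTop_add_atTop hm)).div ((hlim.comp hj).mul (hlim.comp hm))
    (mul_ne_zero hG hG)

lemma tendsto_gaussBinom_central {p : ℂ} (hp : ‖p‖ < 1) (n : ℤ) :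
    Tendsto (fun N : ℕ => gaussBinom p (2 * N) (N + n)) atTop (𝓝 (qpoch p p)⁻¹) := by
  have hshift (s : ℤ) : Tendsto (fun N : ℕ => ((N : ℤ) + s).toNat) atTop atTop :=
    tendsto_atTop_mono (fun N => by omega) (tendsto_sub_atTop_nat s.natAbs)
  refine (tendsto_gaussBinom hp (hshift n) (hshift (-n))).congr' ?_
  filter_upwards [eventually_ge_atTop n.natAbs] with N hN
  congr 1 <;> omega

section JacobiTripleProduct

variable {Q z : ℂ}

lemma summable_norm_pow_sq_mul_pow (hQ : ‖Q‖ < 1) (z : ℂ) :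
    Summable fun n : ℕ => ‖Q ^ (n ^ 2) * z ^ n‖ := by
  have hsmall : ∀ᶠ n : ℕ in atTop, ‖Q ^ n * z‖ ≤ 1 / 2 := by
    have : Tendsto (fun n : ℕ => ‖Q ^ n * z‖) atTop (𝓝 0) := by
      simpa using ((tendsto_pow_atTop_nhds_zero_of_norm_lt_one hQ).mul_const z).norm
    exact this.eventually_le_const one_half_pos
  refine summable_geometric_two.of_norm_bounded_eventually_nat ?_
  filter_upwards [hsmall] with n hn
  rw [norm_norm, sq, pow_mul, ← mul_pow, norm_pow]
  exact pow_le_pow_left₀ (norm_nonneg _) hn n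

lemma summable_norm_zpow_sq_mul_zpow (hQ : ‖Q‖ < 1) (z : ℂ) :
    Summable fun n : ℤ => ‖Q ^ (n ^ 2) * z ^ n‖ := by
  refine .of_nat_of_neg ?_ ?_
  · simpa only [← Nat.cast_pow, zpow_natCast] using summable_norm_pow_sq_mul_pow hQ z
  · simpa only [neg_sq, ← Nat.cast_pow, zpow_natCast, zpow_neg, inv_pow] using
      summable_norm_pow_sq_mul_pow hQ z⁻¹

noncomputable def jacobiPartialTerm (Q z : ℂ) (N : ℕ) (n : ℤ) : ℂ :=
  gaussBinom (Q ^ 2) (2 * N) (N + n) * (Q ^ (n ^ 2) * z ^ n)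

lemma jacobiPartialTerm_succ (hQ : Q ≠ 0) (hz : z ≠ 0) (N : ℕ) (n : ℤ) :
    jacobiPartialTerm Q z (N + 1) n =
      (1 + Q ^ (4 * N + 2)) * jacobiPartialTerm Q z N n +
        z * Q ^ (2 * N + 1) * jacobiPartialTerm Q z N (n - 1) +
        z⁻¹ * Q ^ (2 * N + 1) * jacobiPartialTerm Q z N (n + 1) := by
  have hQ2 : Q ^ 2 ≠ 0 := pow_ne_zero 2 hQ
  have hlow : (Q ^ 2) ^ ((2 * N : ℕ) + 1 - (N + n) : ℤ) * (Q ^ (n ^ 2) * z ^ n) =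
      z * Q ^ (2 * N + 1) * (Q ^ ((n - 1) ^ 2) * z ^ (n - 1)) := by
    rw [show ((2 * N : ℕ) + 1 - (N + n) : ℤ) = N + 1 - n by push_cast; ring,
      show (n - 1) ^ 2 = n ^ 2 - 2 * n + 1 by ring]
    simp only [zpow_add₀ hQ, zpow_sub₀ hQ, zpow_sub₀ hz, zpow_add₀ hQ2, zpow_sub₀ hQ2, zpow_mul,
      zpow_natCast, zpow_ofNat]
    field_simp
    ring
  have hhigh : (Q ^ 2) ^ ((N : ℤ) + n + 1) * (Q ^ (n ^ 2) * z ^ n) =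
      z⁻¹ * Q ^ (2 * N + 1) * (Q ^ ((n + 1) ^ 2) * z ^ (n + 1)) := by
    rw [show (n + 1) ^ 2 = n ^ 2 + 2 * n + 1 by ring]
    simp only [zpow_add₀ hQ, zpow_add₀ hz, zpow_add₀ hQ2, zpow_mul, zpow_natCast, zpow_ofNat]
    field_simp
    ring
  have hmid : (Q ^ 2) ^ (2 * N + 1) = Q ^ (4 * N + 2) := by rw [← pow_mul]; ring_nf
  unfold jacobiPartialTerm
  rw [show 2 * (N + 1) = 2 * N + 2 by ring,
    show ((N + 1 : ℕ) : ℤ) + n = N + n + 1 by push_cast; ring,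
    gaussBinom_add_two hQ2, hmid, ← add_sub_assoc, ← add_assoc]
  linear_combination gaussBinom (Q ^ 2) (2 * N) (N + n - 1) * hlow +
    gaussBinom (Q ^ 2) (2 * N) (N + n + 1) * hhigh

theorem hasSum_jacobiPartialTerm (hQ : Q ≠ 0) (hz : z ≠ 0) (N : ℕ) :
    HasSum (jacobiPartialTerm Q z N)
      (∏ j ∈ range N, ((1 + z * Q ^ (2 * j + 1)) * (1 + z⁻¹ * Q ^ (2 * j + 1)))) := by
  induction N with
  | zero =>
    have h0 : jacobiPartialTerm Q z 0 0 = 1 := by simp [jacobiPartialTerm, gaussBinom]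
    rw [prod_range_zero, ← h0]
    exact hasSum_single 0 fun n hn => by simp [jacobiPartialTerm, gaussBinom, hn]
  | succ N ih =>
    set P := ∏ j ∈ range N, ((1 + z * Q ^ (2 * j + 1)) * (1 + z⁻¹ * Q ^ (2 * j + 1)))
    have hshift (s : ℤ) : HasSum (fun n => jacobiPartialTerm Q z N (n + s)) P :=
      (Equiv.addRight s).hasSum_iff.2 ih
    rw [prod_range_succ, show P * ((1 + z * Q ^ (2 * N + 1)) * (1 + z⁻¹ * Q ^ (2 * N + 1))) =
      (1 + Q ^ (4 * N + 2)) * P + z * Q ^ (2 * N + 1) * P + z⁻¹ * Q ^ (2 * N + 1) * P by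
        field_simp; ring]
    simpa only [← sub_eq_add_neg, ← jacobiPartialTerm_succ hQ hz] using
      ((ih.mul_left (1 + Q ^ (4 * N + 2))).add ((hshift (-1)).mul_left (z * Q ^ (2 * N + 1)))).add
        ((hshift 1).mul_left (z⁻¹ * Q ^ (2 * N + 1)))

theorem jacobi_triple_product (hQ0 : Q ≠ 0) (hQ : ‖Q‖ < 1) (hz : z ≠ 0) :
    ∑' n : ℤ, Q ^ (n ^ 2) * z ^ n =
      qpoch (Q ^ 2) (Q ^ 2) * qpoch (-(z * Q)) (Q ^ 2) * qpoch (-(z⁻¹ * Q)) (Q ^ 2) := by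
  have hp : ‖Q ^ 2‖ < 1 := norm_pow_lt_one hQ two_ne_zero
  obtain ⟨M, hM⟩ := exists_norm_gaussBinom_le hp
  have hsum : Tendsto (fun N => ∑' n, jacobiPartialTerm Q z N n) atTop
      (𝓝 ((qpoch (Q ^ 2) (Q ^ 2))⁻¹ * ∑' n : ℤ, Q ^ (n ^ 2) * z ^ n)) := by
    rw [← tsum_mul_left]
    exact tendsto_tsum_of_dominated_convergence ((summable_norm_zpow_sq_mul_zpow hQ z).mul_left M)
      (fun n => (tendsto_gaussBinom_central hp n).mul_const _)
      (.of_forall fun N n => by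
        rw [jacobiPartialTerm, norm_mul]
        exact mul_le_mul_of_nonneg_right (hM _ _) (norm_nonneg _))
  have hodd (a : ℂ) (j : ℕ) : 1 + a * Q ^ (2 * j + 1) = 1 - -(a * Q) * (Q ^ 2) ^ j := by ring
  have hprod : Tendsto (fun N => ∑' n, jacobiPartialTerm Q z N n) atTop
      (𝓝 (qpoch (-(z * Q)) (Q ^ 2) * qpoch (-(z⁻¹ * Q)) (Q ^ 2))) := by
    simp only [fun N => (hasSum_jacobiPartialTerm hQ0 hz N).tsum_eq, prod_mul_distrib, hodd]
    exact (tendsto_qpochPartial _ hp).mul (tendsto_qpochPartial _ hp)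
  rw [mul_assoc, ← tendsto_nhds_unique hsum hprod, mul_inv_cancel_left₀ (qpoch_ne_zero hp hp)]

end JacobiTripleProduct

theorem stmt6 (q : ℂ) (hq : ‖q‖ < 1) :
    ∑' n : ℤ, q ^ (n * (5 * n + 1)) =
    qpoch q (q ^ 10) * qpoch (q ^ 9) (q ^ 10) * qpoch (q ^ 10) (q ^ 10) *
      (qpoch (q ^ 8) (q ^ 20) * qpoch (q ^ 12) (q ^ 20)) /
      (qpoch q (q ^ 5) * qpoch (q ^ 4) (q ^ 5)) := by
  rcases eq_or_ne q 0 with rfl | hq0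
  · have hsum : ∑' n : ℤ, (0 : ℂ) ^ (n * (5 * n + 1)) = 1 := by
      rw [tsum_eq_single 0 fun n hn => zero_zpow _ (by rcases hn.lt_or_gt with h | h <;> nlinarith)]
      norm_num
    simp [hsum, qpoch]
  have h5 : ‖q ^ 5‖ < 1 := norm_pow_lt_one hq (by norm_num)
  have h10 : ‖q ^ 10‖ < 1 := norm_pow_lt_one hq (by norm_num)
  have hsum : ∑' n : ℤ, q ^ (n * (5 * n + 1)) = ∑' n : ℤ, (q ^ 5) ^ (n ^ 2) * q ^ n := by
    refine tsum_congr fun n => ?_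
    rw [← zpow_natCast, ← zpow_mul, ← zpow_add₀ hq0]
    ring_nf
  rw [hsum, jacobi_triple_product (pow_ne_zero 5 hq0) h5 hq0, qpoch_eq_mul_qpoch_sq q h5,
    qpoch_eq_mul_qpoch_sq (q ^ 4) h5, show q ^ 8 = (q ^ 4) ^ 2 by ring,
    show q ^ 12 = (q ^ 6) ^ 2 by ring, show q ^ 20 = (q ^ 10) ^ 2 by ring, qpoch_sq _ h10,
    qpoch_sq _ h10]
  have hne {k : ℕ} (hk : k ≠ 0) : qpoch (q ^ k) (q ^ 10) ≠ 0 :=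
    qpoch_ne_zero (norm_pow_lt_one hq hk) h10
  ring_nf
  field_simp [qpoch_ne_zero hq h10, hne (k := 4), hne (k := 6), hne (k := 9)]
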